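/- (Gradients of QUBO Hamiltonians.) Let C = a₀•I + C₁ + C₂ where C₁ = ∑_j a_j • Z_j and C₂ = ∑_{j<k} a_{jk} • Z_j·Z_k with real coefficients a₀, a_j, a_{jk}. Then for every integer m ≥ 1: ∇^{2m} C = 4^m • C₁ + 16^{m−1} • ∇²C₂, and ∇^{2m+1} C = 4^m • ∇C₁ + 16^m • ∇C₂. -/

import Mathlib

open Matrix Asymptotics

noncomputable section

abbrev Bits (n : ℕ) := Fin n → Bool

/-- `x` with bit `j` flipped. -/
def flipBit {n : ℕ} (j : Fin n) (x : Bits n) : Bits n := Function.update x j (!x j)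

/-- The bit-flip operator `X_j`. -/
def Xop {n : ℕ} (j : Fin n) : Matrix (Bits n) (Bits n) ℂ :=
  fun x y => if y = flipBit j x then 1 else 0

/-- The transverse-field mixing Hamiltonian `B = ∑ⱼ Xⱼ`. -/
def Bop (n : ℕ) : Matrix (Bits n) (Bits n) ℂ := ∑ j : Fin n, Xop j

/-- The cost Hamiltonian: diagonal matrix with entries `c x`. -/
def Cop {n : ℕ} (c : Bits n → ℝ) : Matrix (Bits n) (Bits n) ℂ :=
  Matrix.diagonal fun x => (c x : ℂ)

/-- The gradient superoperator `∇A = [B, A]`. -/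
def gradB {n : ℕ} (A : Matrix (Bits n) (Bits n) ℂ) : Matrix (Bits n) (Bits n) ℂ :=
  Bop n * A - A * Bop n

/-- The gradient with respect to the cost Hamiltonian `∇_C A = [C, A]`. -/
def gradC {n : ℕ} (c : Bits n → ℝ) (A : Matrix (Bits n) (Bits n) ℂ) :
    Matrix (Bits n) (Bits n) ℂ :=
  Cop c * A - A * Cop c

/-- The uniform superposition state `|s⟩`, every entry `(2^n)^{-1/2}`. -/
def sVec (n : ℕ) : Bits n → ℂ := fun _ => ((Real.sqrt (2 ^ n))⁻¹ : ℝ)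

/-- Initial-state expectation value `⟨A⟩₀ = ⟨s|A|s⟩`. -/
def expect0 {n : ℕ} (A : Matrix (Bits n) (Bits n) ℂ) : ℂ :=
  star (sVec n) ⬝ᵥ (A *ᵥ sVec n)

/-- Partial cost difference `∂ⱼc(x) = c(x⁽ʲ⁾) − c(x)`. -/
def pd {n : ℕ} (c : Bits n → ℝ) (j : Fin n) (x : Bits n) : ℝ := c (flipBit j x) - c x

/-- Cost divergence `dc(x) = ∑ⱼ ∂ⱼc(x)`. -/
def dcFun {n : ℕ} (c : Bits n → ℝ) (x : Bits n) : ℝ := ∑ j : Fin n, pd c j x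

/-- The Pauli `Z` operator on qubit `j`. -/
def Zop {n : ℕ} (j : Fin n) : Matrix (Bits n) (Bits n) ℂ :=
  Matrix.diagonal fun x => if x j then -1 else 1

/-!
Write `B = S + R`, where `S` is the sum of those `X_i` that anticommute with a product `P` of
`Z`'s and `R` commutes with `P`. As all `X_i` commute, `∇^k P = 2^k S^k P`. For `P = Z_j` we get
`S = X_j`, `S² = 1`, hence `∇² Z_j = 4 Z_j`; for `P = Z_j Z_k` we get `S = X_j + X_k`,
`S³ = 4 S`, hence `∇³ P = 16 ∇P`. So `C₁` and `∇C₂` are eigenvectors of `∇²` for `4` and `16`,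
while `∇I = 0`, and both formulas follow.
-/

section Ring

variable {R : Type*} [Ring R] {b s p : R}

theorem lie_pow_mul_of_anticommute (hbs : Commute b s) (hps : p * s = -(s * p))
    (hpr : Commute p (b - s)) (k : ℕ) : ⁅b, s ^ k * p⁆ = 2 • (s ^ (k + 1) * p) := by
  have hpb : p * b = b * p - 2 • (s * p) := by
    have := hpr.eq
    rw [mul_sub, sub_mul, hps, sub_neg_eq_add] at this
    rwa [two_nsmul, ← sub_sub, eq_sub_iff_add_eq]
  rw [Ring.lie_def, mul_assoc, hpb, ← mul_assoc, (hbs.pow_right k).eq, mul_sub, mul_assoc,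
    mul_smul_comm, ← mul_assoc (s ^ k) s, ← pow_succ, sub_sub_cancel]

theorem iterate_lie_of_anticommute (hbs : Commute b s) (hps : p * s = -(s * p))
    (hpr : Commute p (b - s)) (k : ℕ) : (⁅b, ·⁆)^[k] p = 2 ^ k • (s ^ k * p) := by
  induction k with
  | zero => simp
  | succ k ih =>
    rw [Function.iterate_succ_apply', ih, Ring.lie_def, mul_smul_comm, smul_mul_assoc, ← smul_sub,
      ← Ring.lie_def, lie_pow_mul_of_anticommute hbs hps hpr, smul_smul, ← pow_succ]

theorem add_pow_three_of_commute {a b : R} (hab : Commute a b)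
    (ha : a * a = 1) (hb : b * b = 1) : (a + b) ^ 3 = 4 • (a + b) := by
  have hsq : (a + b) ^ 2 = 2 + 2 * (a * b) := by
    rw [hab.add_sq, sq, sq, ha, hb, mul_assoc, add_right_comm, one_add_one_eq_two]
  calc (a + b) ^ 3 = (2 + 2 * (a * b)) * (a + b) := by rw [pow_succ, hsq]
    _ = 2 * (a + b) + 2 * (a * (b * a) + a * (b * b)) := by noncomm_ring
    _ = 4 • (a + b) := by
      rw [← hab.eq, ← mul_assoc, ha, hb, one_mul, mul_one, add_comm b a]
      noncomm_ring

end Ring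

section SquareEigenvector

variable {R M : Type*} [CommSemiring R] [AddCommMonoid M] [Module R M] {f : Module.End R M}
  {x : M} {c : R}

theorem Module.End.pow_two_mul_apply_of_sq_apply_eq_smul (h : (f ^ 2) x = c • x) (m : ℕ) :
    (f ^ (2 * m)) x = c ^ m • x := by
  induction m with
  | zero => simp
  | succ m ih =>
    rw [Nat.mul_succ, pow_add, Module.End.mul_apply, h, map_smul, ih, smul_smul, pow_succ']

theorem Module.End.pow_two_mul_add_one_apply_of_sq_apply_eq_smul (h : (f ^ 2) x = c • x)
    (m : ℕ) : (f ^ (2 * m + 1)) x = c ^ m • f x := by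
  rw [pow_succ', Module.End.mul_apply, pow_two_mul_apply_of_sq_apply_eq_smul h, map_smul]

end SquareEigenvector

variable {n : ℕ}

theorem flipBit_flipBit (j : Fin n) (x : Bits n) : flipBit j (flipBit j x) = x := by
  simp [flipBit]

theorem flipBit_comm (i j : Fin n) (x : Bits n) :
    flipBit i (flipBit j x) = flipBit j (flipBit i x) := by
  rcases eq_or_ne i j with rfl | hij
  · rfl
  · funext k
    simp only [flipBit, Function.update_apply]
    split_ifs <;> simp_all

theorem flipBit_apply_of_ne {i j : Fin n} (h : j ≠ i) (x : Bits n) : flipBit i x j = x j :=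
  Function.update_of_ne h _ _

theorem Xop_mul_apply (j : Fin n) (M : Matrix (Bits n) (Bits n) ℂ) (x y : Bits n) :
    (Xop j * M) x y = M (flipBit j x) y := by
  rw [Matrix.mul_apply, Finset.sum_eq_single (flipBit j x)]
  · simp [Xop]
  · intro z _ hz; simp [Xop, hz]
  · simp

theorem Xop_mul_Xop_self (j : Fin n) : Xop j * Xop j = 1 := by
  ext x y
  rw [Xop_mul_apply]
  simp [Xop, flipBit_flipBit, Matrix.one_apply, eq_comm]

theorem Xop_commute (i j : Fin n) : Commute (Xop i) (Xop j) := by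
  ext x y
  simp [Xop_mul_apply, Xop, flipBit_comm]

theorem Xop_mul_diagonal (j : Fin n) (d : Bits n → ℂ) :
    Xop j * diagonal d = diagonal (fun x => d (flipBit j x)) * Xop j := by
  ext x y
  rw [mul_diagonal, diagonal_mul]
  by_cases h : y = flipBit j x <;> simp [Xop, h]

theorem Zop_commute_Xop {i j : Fin n} (h : i ≠ j) : Commute (Zop j) (Xop i) := by
  change Zop j * Xop i = Xop i * Zop j
  rw [Zop, Xop_mul_diagonal]
  simp only [flipBit_apply_of_ne h.symm]

theorem Zop_mul_Xop_self (j : Fin n) : Zop j * Xop j = -(Xop j * Zop j) := by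
  rw [Zop, Xop_mul_diagonal, ← neg_mul, diagonal_neg]
  congr 2
  funext x
  cases hx : x j <;> simp [flipBit, hx]

theorem Xop_commute_Bop (j : Fin n) : Commute (Xop j) (Bop n) :=
  Commute.sum_right _ _ _ fun i _ => Xop_commute j i

theorem Zop_commute_Bop_sub_Xop (j : Fin n) : Commute (Zop j) (Bop n - Xop j) := by
  rw [Bop, ← Finset.sum_erase_eq_sub (Finset.mem_univ j)]
  exact Commute.sum_right _ _ _ fun i hi => Zop_commute_Xop (Finset.ne_of_mem_erase hi)

theorem Zop_mul_Zop_commute_Bop_sub {j k : Fin n} (h : j ≠ k) :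
    Commute (Zop j * Zop k) (Bop n - (Xop j + Xop k)) := by
  rw [Bop, ← sub_sub, ← Finset.sum_erase_eq_sub (Finset.mem_univ j),
    ← Finset.sum_erase_eq_sub (Finset.mem_erase.2 ⟨h.symm, Finset.mem_univ k⟩)]
  refine Commute.sum_right _ _ _ fun i hi => ?_
  obtain ⟨hik, hij, -⟩ := Finset.mem_erase.1 hi |>.imp_right Finset.mem_erase.1
  exact (Zop_commute_Xop hij).mul_left (Zop_commute_Xop hik)

theorem Zop_mul_Zop_mul_Xop_add_Xop {j k : Fin n} (h : j ≠ k) :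
    Zop j * Zop k * (Xop j + Xop k) = -((Xop j + Xop k) * (Zop j * Zop k)) := by
  have hj : Zop j * Zop k * Xop j = -(Xop j * (Zop j * Zop k)) := by
    rw [mul_assoc, (Zop_commute_Xop h).eq, ← mul_assoc, Zop_mul_Xop_self, neg_mul, mul_assoc]
  have hk : Zop j * Zop k * Xop k = -(Xop k * (Zop j * Zop k)) := by
    rw [mul_assoc, Zop_mul_Xop_self, mul_neg, ← mul_assoc, (Zop_commute_Xop h.symm).eq,
      mul_assoc]
  rw [mul_add, add_mul, neg_add, hj, hk]

theorem gradB_eq_lie : gradB = fun A : Matrix (Bits n) (Bits n) ℂ => ⁅Bop n, A⁆ :=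
  funext fun _ => (Ring.lie_def _ _).symm

def gradBₗ (n : ℕ) : Module.End ℂ (Matrix (Bits n) (Bits n) ℂ) :=
  LinearMap.mulLeft ℂ (Bop n) - LinearMap.mulRight ℂ (Bop n)

theorem coe_gradBₗ : ⇑(gradBₗ n) = gradB := rfl

theorem coe_gradBₗ_pow (k : ℕ) : ⇑(gradBₗ n ^ k) = gradB^[k] := Module.End.coe_pow _ k

theorem gradBₗ_pow_Zop (j : Fin n) (k : ℕ) :
    (gradBₗ n ^ k) (Zop j) = 2 ^ k • (Xop j ^ k * Zop j) := by
  rw [coe_gradBₗ_pow, gradB_eq_lie]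
  exact iterate_lie_of_anticommute (Xop_commute_Bop j).symm (Zop_mul_Xop_self j)
    (Zop_commute_Bop_sub_Xop j) k

theorem gradBₗ_pow_Zop_mul_Zop {j k : Fin n} (h : j ≠ k) (l : ℕ) :
    (gradBₗ n ^ l) (Zop j * Zop k) = 2 ^ l • ((Xop j + Xop k) ^ l * (Zop j * Zop k)) := by
  rw [coe_gradBₗ_pow, gradB_eq_lie]
  exact iterate_lie_of_anticommute ((Xop_commute_Bop j).add_left (Xop_commute_Bop k)).symm
    (Zop_mul_Zop_mul_Xop_add_Xop h) (Zop_mul_Zop_commute_Bop_sub h) l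

theorem gradBₗ_sq_Zop (j : Fin n) : (gradBₗ n ^ 2) (Zop j) = (4 : ℂ) • Zop j := by
  rw [gradBₗ_pow_Zop, sq (Xop j), Xop_mul_Xop_self, one_mul, ofNat_smul_eq_nsmul]
  norm_num

theorem gradBₗ_pow_three_Zop_mul_Zop {j k : Fin n} (h : j ≠ k) :
    (gradBₗ n ^ 3) (Zop j * Zop k) = (16 : ℂ) • gradBₗ n (Zop j * Zop k) := by
  conv_rhs => rw [← pow_one (gradBₗ n)]
  rw [gradBₗ_pow_Zop_mul_Zop h, gradBₗ_pow_Zop_mul_Zop h,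
    add_pow_three_of_commute (Xop_commute j k) (Xop_mul_Xop_self j) (Xop_mul_Xop_self k),
    pow_one, pow_one, smul_mul_assoc]
  module

theorem gradBₗ_sq_sum_smul_Zop (c : Fin n → ℂ) :
    (gradBₗ n ^ 2) (∑ j, c j • Zop j) = (4 : ℂ) • ∑ j, c j • Zop j := by
  simp only [map_sum, map_smul, gradBₗ_sq_Zop, Finset.smul_sum, smul_comm (4 : ℂ)]

theorem gradBₗ_pow_three_sum_Zop_mul_Zop (c : Fin n → Fin n → ℂ) :
    (gradBₗ n ^ 3) (∑ j, ∑ k, if j < k then c j k • (Zop j * Zop k) else 0) =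
      (16 : ℂ) • gradBₗ n (∑ j, ∑ k, if j < k then c j k • (Zop j * Zop k) else 0) := by
  simp only [map_sum, Finset.smul_sum]
  refine Finset.sum_congr rfl fun j _ => Finset.sum_congr rfl fun k _ => ?_
  split_ifs with hjk
  · rw [map_smul, map_smul, gradBₗ_pow_three_Zop_mul_Zop hjk.ne, smul_comm]
  · simp only [map_zero, smul_zero]

theorem stmt15_general (n : ℕ) (a0 : ℝ) (a : Fin n → ℝ) (A : Fin n → Fin n → ℝ)
    (C C1 C2 : Matrix (Bits n) (Bits n) ℂ)
    (hC1 : C1 = ∑ j : Fin n, (a j : ℂ) • Zop j)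
    (hC2 : C2 = ∑ j : Fin n, ∑ k : Fin n, if j < k then (A j k : ℂ) • (Zop j * Zop k) else 0)
    (hC : C = (a0 : ℂ) • (1 : Matrix (Bits n) (Bits n) ℂ) + C1 + C2)
    (m : ℕ) (hm : 1 ≤ m) :
    gradB^[2 * m] C = ((4 : ℂ) ^ m) • C1 + ((16 : ℂ) ^ (m - 1)) • gradB^[2] C2 ∧
    gradB^[2 * m + 1] C = ((4 : ℂ) ^ m) • gradB C1 + ((16 : ℂ) ^ m) • gradB C2 := by
  obtain ⟨m, rfl⟩ := Nat.exists_eq_add_of_le' hm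
  rw [← coe_gradBₗ_pow, ← coe_gradBₗ_pow, ← coe_gradBₗ_pow, ← coe_gradBₗ, Nat.add_sub_cancel]
  set f := gradBₗ n
  have hC1sq : (f ^ 2) C1 = (4 : ℂ) • C1 := hC1 ▸ gradBₗ_sq_sum_smul_Zop fun j => (a j : ℂ)
  have hC2sq : (f ^ 2) (f C2) = (16 : ℂ) • f C2 := by
    rw [← Module.End.mul_apply, ← pow_succ, hC2, gradBₗ_pow_three_sum_Zop_mul_Zop]
  have hsplit (k : ℕ) : (f ^ (k + 1)) C = (f ^ (k + 1)) C1 + (f ^ k) (f C2) := by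
    have hf1 : f 1 = 0 := by simp [f, gradBₗ]
    simp only [pow_succ, Module.End.mul_apply, hC, map_add, map_smul, hf1, smul_zero, map_zero,
      zero_add]
  constructor
  · calc (f ^ (2 * (m + 1))) C = (f ^ (2 * (m + 1))) C1 + (f ^ (2 * m + 1)) (f C2) :=
          hsplit (2 * m + 1)
      _ = (4 : ℂ) ^ (m + 1) • C1 + (16 : ℂ) ^ m • (f ^ 2) C2 := by
        rw [Module.End.pow_two_mul_apply_of_sq_apply_eq_smul hC1sq,
          Module.End.pow_two_mul_add_one_apply_of_sq_apply_eq_smul hC2sq, sq,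
          Module.End.mul_apply]
  · rw [hsplit, Module.End.pow_two_mul_add_one_apply_of_sq_apply_eq_smul hC1sq,
      Module.End.pow_two_mul_apply_of_sq_apply_eq_smul hC2sq]

theorem stmt15 (n : ℕ) (hn : 1 ≤ n) (a0 : ℝ) (a : Fin n → ℝ) (A : Fin n → Fin n → ℝ)
    (C C1 C2 : Matrix (Bits n) (Bits n) ℂ)
    (hC1 : C1 = ∑ j : Fin n, (a j : ℂ) • Zop j)
    (hC2 : C2 = ∑ j : Fin n, ∑ k : Fin n, if j < k then (A j k : ℂ) • (Zop j * Zop k) else 0)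
    (hC : C = (a0 : ℂ) • (1 : Matrix (Bits n) (Bits n) ℂ) + C1 + C2)
    (m : ℕ) (hm : 1 ≤ m) :
    gradB^[2 * m] C = ((4 : ℂ) ^ m) • C1 + ((16 : ℂ) ^ (m - 1)) • gradB^[2] C2 ∧
    gradB^[2 * m + 1] C = ((4 : ℂ) ^ m) • gradB C1 + ((16 : ℂ) ^ m) • gradB C2 :=
  stmt15_general n a0 a A C C1 C2 hC1 hC2 hC m hm
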